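/- Let s ≥ t+1 ≥ 2 and let T(s,t) be the caterpillar consisting of a path v_1,…,v_t where each v_i additionally has s−1 pendant leaves attached. Then γ_g(T(s,t)) = 2t − 1. -/

import Mathlib

/-
Upper bound: for a dominating set `S`, Dominator always plays a vertex of `S` whose closed
neighbourhood is not yet dominated. Each of his moves retires one vertex of `S` and nothing ever
un-retires one, so the game ends within `2 * #S - 1` moves. The spine of `T(s,t)` is a dominating
set of size `t`.

Lower bound: call a column open while one of its `s - 1` leaves is undominated, and let `hits` count
the dominated leaves of open columns. A move closes at most one column and raises `hits` by at most
one (only a leaf move can, and then it closes no column). Staller always plays an undominated leaf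
of an open column, which closes that column only if it was its last undominated leaf, i.e. only once
`hits ≥ s - 2`. Hence `open + min (open - 1) (s - 2 - hits)` moves remain with Dominator to move,
and this is `2t - 1` at the start because `s - 2 ≥ t - 1`.
-/

open Finset

namespace DomGame

variable {V : Type*} [Fintype V] [DecidableEq V]

/-- Closed neighborhood of `v` in `G`, as a `Finset`. -/
noncomputable def cn (G : SimpleGraph V) (v : V) : Finset V :=
  haveI : DecidablePred (fun u : V => u = v ∨ G.Adj v u) := fun _ => Classical.propDecidable _
  Finset.univ.filter (fun u : V => u = v ∨ G.Adj v u)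

/-- Value (number of remaining moves, optimal play) of the domination game on `G`,
with fuel, where `D` is the set of already dominated vertices and `who = true`
means Dominator is to move (minimizing); `who = false` means Staller (maximizing). -/
noncomputable def auxVal (G : SimpleGraph V) : ℕ → Bool → Finset V → ℕ
  | 0, _, _ => 0
  | n + 1, who, D =>
    if D = Finset.univ then 0
    else
      haveI : DecidablePred (fun v : V => ¬ cn G v ⊆ D) := fun _ => Classical.propDecidable _
      let moves : Finset V := Finset.univ.filter (fun v : V => ¬ cn G v ⊆ D)
      if who then
        WithTop.untopD 0 ((moves.image (fun v => 1 + auxVal G n false (D ∪ cn G v))).min)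
      else
        moves.sup (fun v => 1 + auxVal G n true (D ∪ cn G v))

/-- Remaining moves of the domination game on the partially dominated graph `(G, D)`,
Dominator to move, both players optimal. -/
noncomputable def gVal (G : SimpleGraph V) (D : Finset V) : ℕ :=
  auxVal G (Fintype.card V) true D

/-- Remaining moves, Staller to move. -/
noncomputable def gVal' (G : SimpleGraph V) (D : Finset V) : ℕ :=
  auxVal G (Fintype.card V) false D

/-- The game domination number (Dominator starts). -/
noncomputable def gammaG (G : SimpleGraph V) : ℕ := gVal G ∅

/-- The Staller-start game domination number. -/
noncomputable def gammaG' (G : SimpleGraph V) : ℕ := gVal' G ∅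

/-- `S` is a dominating set of `G`. -/
def IsDomSet (G : SimpleGraph V) (S : Finset V) : Prop :=
  ∀ v : V, ∃ u ∈ S, u = v ∨ G.Adj u v

/-- The domination number of `G`. -/
noncomputable def gamma (G : SimpleGraph V) : ℕ :=
  sInf {n | ∃ S : Finset V, IsDomSet G S ∧ S.card = n}

end DomGame

/-- The caterpillar `T(s,t)`: a path `v_1, …, v_t` (the vertices `(i, 0)`),
with `s − 1` pendant leaves `(i, j)`, `j ≠ 0`, attached to each `v_i`. -/
def caterpillar (s t : ℕ) : SimpleGraph (Fin t × Fin s) :=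
  SimpleGraph.fromRel (fun a b =>
    ((a.2 : ℕ) = 0 ∧ (b.2 : ℕ) = 0 ∧ (a.1 : ℕ) + 1 = (b.1 : ℕ)) ∨
    (a.1 = b.1 ∧ (a.2 : ℕ) = 0 ∧ (b.2 : ℕ) ≠ 0))

namespace DomGame

variable {V : Type*} [Fintype V] [DecidableEq V] {G : SimpleGraph V}

omit [DecidableEq V] in
lemma mem_cn {u v : V} : u ∈ cn G v ↔ u = v ∨ G.Adj v u := by
  simp [cn]

omit [DecidableEq V] in
lemma self_mem_cn (v : V) : v ∈ cn G v := mem_cn.2 (Or.inl rfl)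

omit [DecidableEq V] in
lemma exists_not_cn_subset {D : Finset V} (hD : D ≠ univ) : ∃ v, ¬ cn G v ⊆ D := by
  obtain ⟨v, hv⟩ := exists_of_ssubset (ssubset_univ_iff.2 hD)
  exact ⟨v, fun h => hv.2 (h (self_mem_cn v))⟩

omit [DecidableEq V] in
lemma ne_univ_of_not_cn_subset {D : Finset V} {v : V} (hv : ¬ cn G v ⊆ D) : D ≠ univ := by
  rintro rfl
  exact hv (subset_univ _)

lemma card_compl_union_cn_lt {D : Finset V} {v : V} (hv : ¬ cn G v ⊆ D) :
    #(univ \ (D ∪ cn G v)) < #(univ \ D) := by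
  obtain ⟨x, hx, hxD⟩ := not_subset.1 hv
  refine card_lt_card <|
    (ssubset_iff_of_subset <| sdiff_subset_sdiff le_rfl subset_union_left).2 ?_
  exact ⟨x, by simp [hxD], by simp [hx]⟩

lemma auxVal_univ (n : ℕ) (who : Bool) : auxVal G n who univ = 0 := by
  cases n <;> simp [auxVal]

lemma auxVal_succ_true_le {D : Finset V} {v : V} (hv : ¬ cn G v ⊆ D) (n : ℕ) :
    auxVal G (n + 1) true D ≤ 1 + auxVal G n false (D ∪ cn G v) := by
  rw [auxVal, if_neg (ne_univ_of_not_cn_subset hv), if_pos rfl]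
  exact WithTop.untopD_le <| min_le <| mem_image_of_mem _ <| by simpa using hv

lemma le_auxVal_succ_true {D : Finset V} (hD : D ≠ univ) {n m : ℕ}
    (h : ∀ v, ¬ cn G v ⊆ D → m ≤ 1 + auxVal G n false (D ∪ cn G v)) :
    m ≤ auxVal G (n + 1) true D := by
  obtain ⟨w, hw⟩ := exists_not_cn_subset (G := G) hD
  rw [auxVal, if_neg hD, if_pos rfl]
  refine (WithTop.le_untopD_iff fun htop => ?_).2 (Finset.le_min fun a ha => ?_)
  · simp only [Finset.min_eq_top, image_eq_empty, filter_eq_empty_iff] at htop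
    exact absurd hw (htop (mem_univ w))
  · obtain ⟨v, hv, rfl⟩ := mem_image.1 ha
    exact WithTop.coe_le_coe.2 (h v (by simpa using hv))

lemma le_auxVal_succ_false {D : Finset V} {v : V} (hv : ¬ cn G v ⊆ D) (n : ℕ) :
    1 + auxVal G n true (D ∪ cn G v) ≤ auxVal G (n + 1) false D := by
  rw [auxVal, if_neg (ne_univ_of_not_cn_subset hv), if_neg Bool.false_ne_true]
  exact le_sup (f := fun v => 1 + auxVal G n true (D ∪ cn G v)) (by simpa using hv)

lemma auxVal_succ_false_le {D : Finset V} (hD : D ≠ univ) {n m : ℕ}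
    (h : ∀ v, ¬ cn G v ⊆ D → 1 + auxVal G n true (D ∪ cn G v) ≤ m) :
    auxVal G (n + 1) false D ≤ m := by
  rw [auxVal, if_neg hD, if_neg Bool.false_ne_true]
  exact Finset.sup_le fun v hv => h v (by simpa using hv)

theorem auxVal_le_of_dominator_strategy (U : Bool → Finset V → ℕ)
    (hdom : ∀ D, D ≠ univ →
      ∃ v, ¬ cn G v ⊆ D ∧ 1 + U false (D ∪ cn G v) ≤ U true D)
    (hsta : ∀ D v, ¬ cn G v ⊆ D → 1 + U true (D ∪ cn G v) ≤ U false D) :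
    ∀ n who D, auxVal G n who D ≤ U who D := by
  intro n
  induction n with
  | zero => simp [auxVal]
  | succ n ih =>
    intro who D
    by_cases hD : D = univ
    · simp [hD, auxVal_univ]
    cases who
    · exact auxVal_succ_false_le hD fun v hv =>
        (Nat.add_le_add_left (ih true _) 1).trans (hsta D v hv)
    · obtain ⟨v, hv, hU⟩ := hdom D hD
      exact (auxVal_succ_true_le hv n).trans ((Nat.add_le_add_left (ih false _) 1).trans hU)

-- `auxVal` is `0` once the fuel runs out, so a lower bound needs one unit of fuel per move left.
theorem le_auxVal_of_staller_strategy (L : Bool → Finset V → ℕ)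
    (huniv : ∀ who, L who univ = 0)
    (hdom : ∀ D v, ¬ cn G v ⊆ D → L true D ≤ 1 + L false (D ∪ cn G v))
    (hsta : ∀ D, D ≠ univ →
      ∃ v, ¬ cn G v ⊆ D ∧ L false D ≤ 1 + L true (D ∪ cn G v)) :
    ∀ n who D, #(univ \ D) ≤ n → L who D ≤ auxVal G n who D := by
  intro n
  induction n with
  | zero =>
    intro who D hD
    rw [Nat.le_zero, card_eq_zero, sdiff_eq_empty_iff_subset, univ_subset_iff] at hD
    simp [hD, huniv]
  | succ n ih =>
    intro who D hfuel
    by_cases hD : D = univ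
    · simp [hD, huniv]
    have ih' : ∀ who v, ¬ cn G v ⊆ D →
        L who (D ∪ cn G v) ≤ auxVal G n who (D ∪ cn G v) :=
      fun who v hv => ih who _ (Nat.le_of_lt_succ ((card_compl_union_cn_lt hv).trans_le hfuel))
    cases who
    · obtain ⟨v, hv, hL⟩ := hsta D hD
      exact hL.trans ((Nat.add_le_add_left (ih' true v hv) 1).trans (le_auxVal_succ_false hv n))
    · exact le_auxVal_succ_true hD fun v hv =>
        (hdom D v hv).trans (Nat.add_le_add_left (ih' false v hv) 1)

theorem gammaG_le_of_dominator_strategy (U : Bool → Finset V → ℕ)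
    (hdom : ∀ D, D ≠ univ →
      ∃ v, ¬ cn G v ⊆ D ∧ 1 + U false (D ∪ cn G v) ≤ U true D)
    (hsta : ∀ D v, ¬ cn G v ⊆ D → 1 + U true (D ∪ cn G v) ≤ U false D) :
    gammaG G ≤ U true ∅ :=
  auxVal_le_of_dominator_strategy U hdom hsta _ true ∅

theorem le_gammaG_of_staller_strategy (L : Bool → Finset V → ℕ)
    (huniv : ∀ who, L who univ = 0)
    (hdom : ∀ D v, ¬ cn G v ⊆ D → L true D ≤ 1 + L false (D ∪ cn G v))
    (hsta : ∀ D, D ≠ univ →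
      ∃ v, ¬ cn G v ⊆ D ∧ L false D ≤ 1 + L true (D ∪ cn G v)) :
    L true ∅ ≤ gammaG G :=
  le_auxVal_of_staller_strategy L huniv hdom hsta _ true ∅ (card_le_univ _)

theorem gammaG_le_two_mul_card_sub_one {S : Finset V} (hS : IsDomSet G S) :
    gammaG G ≤ 2 * #S - 1 := by
  set undone : Finset V → Finset V := fun D => S.filter fun u => ¬ cn G u ⊆ D
  have undone_nonempty : ∀ D, D ≠ univ → (undone D).Nonempty := by
    intro D hD
    obtain ⟨x, -, hx⟩ := exists_of_ssubset (ssubset_univ_iff.2 hD)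
    obtain ⟨u, hu, hxu⟩ := hS x
    exact ⟨u, mem_filter.2 ⟨hu, fun h => hx (h (mem_cn.2 (hxu.imp Eq.symm id)))⟩⟩
  have undone_mono : ∀ D v, undone (D ∪ cn G v) ⊆ undone D := fun D v u hu =>
    mem_filter.2 ⟨(mem_filter.1 hu).1, fun h => (mem_filter.1 hu).2 (h.trans subset_union_left)⟩
  refine (gammaG_le_of_dominator_strategy (fun who D => 2 * #(undone D) - who.toNat) ?_ ?_).trans
    ?_
  · intro D hD
    obtain ⟨u, hu⟩ := undone_nonempty D hD
    have hlt : #(undone (D ∪ cn G u)) < #(undone D) :=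
      card_lt_card <| (ssubset_iff_of_subset (undone_mono D u)).2
        ⟨u, hu, fun h => (mem_filter.1 h).2 subset_union_right⟩
    exact ⟨u, (mem_filter.1 hu).2, by simp only [Bool.toNat_true, Bool.toNat_false]; omega⟩
  · intro D v hv
    have hpos := (undone_nonempty D (ne_univ_of_not_cn_subset hv)).card_pos
    have hle := card_le_card (undone_mono D v)
    simp only [Bool.toNat_true, Bool.toNat_false]
    omega
  · have : #(undone ∅) ≤ #S := card_filter_le _ _
    simp only [Bool.toNat_true]
    omega

end DomGame

namespace Caterpillar

open DomGame

variable {s t : ℕ}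

lemma eq_or_spine_of_leaf_mem_cn {x v : Fin t × Fin s} (hx : (x.2 : ℕ) ≠ 0)
    (h : x ∈ cn (caterpillar s t) v) : x = v ∨ v.1 = x.1 ∧ (v.2 : ℕ) = 0 := by
  rw [mem_cn, caterpillar, SimpleGraph.fromRel_adj] at h
  rcases h with h | ⟨-, (⟨-, h, -⟩ | ⟨h1, h2, -⟩) | (⟨h, -⟩ | ⟨-, h, -⟩)⟩
  · exact .inl h
  · exact absurd h hx
  · exact .inr ⟨h1, h2⟩
  · exact absurd h hx
  · exact absurd h hx

lemma mem_cn_of_spine {x v : Fin t × Fin s} (hv : (v.2 : ℕ) = 0) (hx : x.1 = v.1) :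
    x ∈ cn (caterpillar s t) v := by
  rw [mem_cn, caterpillar, SimpleGraph.fromRel_adj]
  by_cases hxv : x = v
  · exact .inl hxv
  refine .inr ⟨Ne.symm hxv, .inl (.inr ⟨hx.symm, hv, fun hx2 => hxv ?_⟩)⟩
  exact Prod.ext hx (Fin.ext (hx2.trans hv.symm))

def leaves (s : ℕ) {t : ℕ} (i : Fin t) : Finset (Fin t × Fin s) :=
  univ.filter fun x => x.1 = i ∧ (x.2 : ℕ) ≠ 0

def openCols (D : Finset (Fin t × Fin s)) : Finset (Fin t) :=
  univ.filter fun i => ¬ leaves s i ⊆ D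

def hitLeaves (D : Finset (Fin t × Fin s)) : Finset (Fin t × Fin s) :=
  D.filter fun x => (x.2 : ℕ) ≠ 0 ∧ x.1 ∈ openCols D

def stallerBound (who : Bool) (D : Finset (Fin t × Fin s)) : ℕ :=
  #(openCols D) + min (#(openCols D) - who.toNat) (s - 2 - #(hitLeaves D))

@[simp]
lemma mem_leaves {i : Fin t} {x : Fin t × Fin s} :
    x ∈ leaves s i ↔ x.1 = i ∧ (x.2 : ℕ) ≠ 0 := by
  simp [leaves]

@[simp]
lemma mem_openCols {D : Finset (Fin t × Fin s)} {i : Fin t} :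
    i ∈ openCols D ↔ ¬ leaves s i ⊆ D := by
  simp [openCols]

@[simp]
lemma mem_hitLeaves {D : Finset (Fin t × Fin s)} {x : Fin t × Fin s} :
    x ∈ hitLeaves D ↔ x ∈ D ∧ (x.2 : ℕ) ≠ 0 ∧ x.1 ∈ openCols D := by
  simp [hitLeaves]

lemma card_leaves (hs : 0 < s) (i : Fin t) : #(leaves s i) = s - 1 := by
  have : leaves s i = {i} ×ˢ univ.erase (⟨0, hs⟩ : Fin s) := by
    ext x
    simp only [mem_leaves, mem_product, mem_singleton, mem_erase, mem_univ, and_true, ne_eq,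
      Fin.ext_iff]
  rw [this, card_product, card_singleton, one_mul, card_erase_of_mem (mem_univ _), card_fin]

lemma openCols_anti {D D' : Finset (Fin t × Fin s)} (h : D ⊆ D') :
    openCols D' ⊆ openCols D := by
  intro i
  simp only [mem_openCols]
  exact mt fun hi => hi.trans h

lemma erase_openCols_subset (D : Finset (Fin t × Fin s)) (v : Fin t × Fin s) :
    (openCols D).erase v.1 ⊆ openCols (D ∪ cn (caterpillar s t) v) := by
  intro i hi
  obtain ⟨hiv, hi⟩ := mem_erase.1 hi
  obtain ⟨x, hx, hxD⟩ := not_subset.1 (mem_openCols.1 hi)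
  rw [mem_leaves] at hx
  refine mem_openCols.2 fun hsub => ?_
  rcases mem_union.1 (hsub (mem_leaves.2 hx)) with hxD' | hxv
  · exact hxD hxD'
  · rcases eq_or_spine_of_leaf_mem_cn hx.2 hxv with rfl | ⟨hv, -⟩
    · exact hiv hx.1.symm
    · exact hiv (hx.1 ▸ hv.symm)

lemma openCols_union_cn_of_mem {D : Finset (Fin t × Fin s)} {v : Fin t × Fin s}
    (h : v.1 ∈ openCols (D ∪ cn (caterpillar s t) v)) :
    openCols (D ∪ cn (caterpillar s t) v) = openCols D := by
  refine (openCols_anti subset_union_left).antisymm fun i hi => ?_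
  by_cases hiv : i = v.1
  · exact hiv ▸ h
  · exact erase_openCols_subset D v (mem_erase.2 ⟨hiv, hi⟩)

lemma card_openCols_le_succ (D : Finset (Fin t × Fin s)) (v : Fin t × Fin s) :
    #(openCols D) ≤ #(openCols (D ∪ cn (caterpillar s t) v)) + 1 := by
  have := card_le_card (erase_openCols_subset D v)
  have := pred_card_le_card_erase (s := openCols D) (a := v.1)
  omega

lemma hitLeaves_union_cn_subset (D : Finset (Fin t × Fin s)) (v : Fin t × Fin s) :
    hitLeaves (D ∪ cn (caterpillar s t) v) ⊆ insert v (hitLeaves D) := by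
  intro x hx
  obtain ⟨hxD, hx2, hxo⟩ := mem_hitLeaves.1 hx
  rcases mem_union.1 hxD with hxD | hxv
  · exact mem_insert_of_mem (mem_hitLeaves.2 ⟨hxD, hx2, openCols_anti subset_union_left hxo⟩)
  rcases eq_or_spine_of_leaf_mem_cn hx2 hxv with rfl | ⟨hv1, hv2⟩
  · exact mem_insert_self _ _
  · refine absurd (fun y hy => ?_) (mem_openCols.1 hxo)
    exact mem_union_right _ (mem_cn_of_spine hv2 ((mem_leaves.1 hy).1.trans hv1.symm))

lemma hitLeaves_union_cn_subset_of_notMem {D : Finset (Fin t × Fin s)} {v : Fin t × Fin s}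
    (h : v.1 ∉ openCols (D ∪ cn (caterpillar s t) v)) :
    hitLeaves (D ∪ cn (caterpillar s t) v) ⊆ hitLeaves D :=
  (subset_insert_iff_of_notMem fun hv => h (mem_hitLeaves.1 hv).2.2).1
    (hitLeaves_union_cn_subset D v)

lemma sub_two_le_card_hitLeaves (hs : 0 < s) {D : Finset (Fin t × Fin s)} {x : Fin t × Fin s}
    (hx : (x.2 : ℕ) ≠ 0) (hopen : x.1 ∈ openCols D)
    (hclosed : x.1 ∉ openCols (D ∪ cn (caterpillar s t) x)) : s - 2 ≤ #(hitLeaves D) := by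
  have hsub : (leaves s x.1).erase x ⊆ hitLeaves D := by
    intro y hy
    obtain ⟨hyx, hy⟩ := mem_erase.1 hy
    obtain ⟨hy1, hy2⟩ := mem_leaves.1 hy
    have hyD : y ∈ D := by
      rcases mem_union.1 (not_not.1 (mem_openCols.not.1 hclosed) hy) with hyD | hyx'
      · exact hyD
      · rcases eq_or_spine_of_leaf_mem_cn hy2 hyx' with h | ⟨-, h⟩
        · exact absurd h hyx
        · exact absurd h hx
    exact mem_hitLeaves.2 ⟨hyD, hy2, hy1 ▸ hopen⟩
  have := card_le_card hsub
  rw [card_erase_of_mem (mem_leaves.2 ⟨rfl, hx⟩), card_leaves hs] at this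
  omega

lemma stallerBound_univ (who : Bool) :
    stallerBound who (univ : Finset (Fin t × Fin s)) = 0 := by
  have : openCols (univ : Finset (Fin t × Fin s)) = ∅ := by
    ext i
    simp
  simp [stallerBound, this]

lemma stallerBound_true_le (D : Finset (Fin t × Fin s)) (v : Fin t × Fin s) :
    stallerBound true D ≤ 1 + stallerBound false (D ∪ cn (caterpillar s t) v) := by
  have hn := card_openCols_le_succ D v
  have hh := (card_le_card (hitLeaves_union_cn_subset D v)).trans (card_insert_le _ _)
  unfold stallerBound
  by_cases hv : v.1 ∈ openCols (D ∪ cn (caterpillar s t) v)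
  · rw [openCols_union_cn_of_mem hv]
    simp only [Bool.toNat_true, Bool.toNat_false]
    omega
  · have := card_le_card (hitLeaves_union_cn_subset_of_notMem hv)
    simp only [Bool.toNat_true, Bool.toNat_false]
    omega

lemma exists_staller_move (hs : 0 < s) {D : Finset (Fin t × Fin s)} (hD : D ≠ univ) :
    ∃ v, ¬ cn (caterpillar s t) v ⊆ D ∧
      stallerBound false D ≤ 1 + stallerBound true (D ∪ cn (caterpillar s t) v) := by
  rcases (openCols D).eq_empty_or_nonempty with hempty | ⟨i, hi⟩
  · obtain ⟨v, hv⟩ := exists_not_cn_subset hD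
    exact ⟨v, hv, by simp [stallerBound, hempty]⟩
  obtain ⟨x, hx, hxD⟩ := not_subset.1 (mem_openCols.1 hi)
  obtain ⟨rfl, hx2⟩ := mem_leaves.1 hx
  refine ⟨x, fun h => hxD (h (self_mem_cn x)), ?_⟩
  have hn := card_openCols_le_succ D x
  have hpos := card_pos.2 ⟨_, hi⟩
  have hh := (card_le_card (hitLeaves_union_cn_subset D x)).trans (card_insert_le _ _)
  unfold stallerBound
  by_cases hopen : x.1 ∈ openCols (D ∪ cn (caterpillar s t) x)
  · rw [openCols_union_cn_of_mem hopen]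
    simp only [Bool.toNat_true, Bool.toNat_false]
    omega
  · have := sub_two_le_card_hitLeaves hs hx2 hi hopen
    simp only [Bool.toNat_true, Bool.toNat_false]
    omega

lemma stallerBound_true_empty (hs : 1 < s) :
    stallerBound true (∅ : Finset (Fin t × Fin s)) = t + min (t - 1) (s - 2) := by
  have : openCols (∅ : Finset (Fin t × Fin s)) = univ := by
    ext i
    simp only [mem_openCols, subset_empty, mem_univ, iff_true]
    exact ne_empty_of_mem (a := (i, ⟨1, hs⟩)) (mem_leaves.2 ⟨rfl, one_ne_zero⟩)
  simp [stallerBound, this, hitLeaves]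

def spine (s t : ℕ) : Finset (Fin t × Fin s) :=
  univ.filter fun x => (x.2 : ℕ) = 0

lemma card_spine (hs : 0 < s) : #(spine s t) = t := by
  have : spine s t = univ ×ˢ {(⟨0, hs⟩ : Fin s)} := by
    ext x
    simp only [spine, mem_filter, mem_product, mem_univ, mem_singleton, true_and, Fin.ext_iff]
  rw [this, card_product, card_singleton, mul_one, card_univ, Fintype.card_fin]

lemma isDomSet_spine (hs : 0 < s) : IsDomSet (caterpillar s t) (spine s t) := by
  intro x
  refine ⟨(x.1, ⟨0, hs⟩), by simp [spine], ?_⟩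
  exact (mem_cn.1 (mem_cn_of_spine (x := x) (v := (x.1, ⟨0, hs⟩)) rfl rfl)).imp Eq.symm id

end Caterpillar

/-- for s ≥ t+1 ≥ 2, γ_g(T(s,t)) = 2t − 1. -/
theorem stmt5 (s t : ℕ) (ht : 1 ≤ t) (hs : t + 1 ≤ s) :
    DomGame.gammaG (caterpillar s t) = 2 * t - 1 := by
  open DomGame Caterpillar in
  refine le_antisymm ?_ ?_
  · calc gammaG (caterpillar s t) ≤ 2 * #(spine s t) - 1 :=
          gammaG_le_two_mul_card_sub_one (isDomSet_spine (by omega))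
      _ = 2 * t - 1 := by rw [card_spine (by omega)]
  · calc 2 * t - 1 = stallerBound true (∅ : Finset (Fin t × Fin s)) := by
          rw [stallerBound_true_empty (by omega)]
          omega
      _ ≤ gammaG (caterpillar s t) :=
          le_gammaG_of_staller_strategy _ stallerBound_univ
            (fun D v _ => stallerBound_true_le D v) fun _ => exists_staller_move (by omega)
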